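/- arXiv:1806.11253 — 3 statements merged into one kernel-verified Lean document; each statement's English description precedes it below -/
import Mathlib

section
/- For an n×n row-stochastic matrix P define the ergodicity coefficient τ₁(P) = 1 − min_{i,j} ∑_{s=1}^n min(P_{is}, P_{js}). Let A be an n×n real matrix with all off-diagonal entries nonnegative, all diagonal entries in [−1,0], and every row summing to zero, such that P = I + A is scrambling, i.e., δ := min_{i,j} ∑_s min(P_{is}, P_{js}) > 0. For t ∈ ℕ let Ω(t) be the diagonal matrix with entries ω_i(t) ∈ [0,1], and suppose there exists T such that ω_i(t) ≤ 1/2 for all i and all t ≥ T, and that ∑_{t=0}^∞ min_i ω_i(t) = ∞. Then: (i) for all t ≥ T, τ₁(I + Ω(t)A) ≤ 1 − δ·min_i ω_i(t); and (ii) τ₁((I + Ω(t)A)·(I + Ω(t−1)A)···(I + Ω(0)A)) → 0 as t → ∞. -/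
open Matrix Filter Topology

/-- Markov's ergodicity coefficient `τ₁(P) = 1 - min_{i,j} ∑ₛ min(P_{is}, P_{js})`. -/
noncomputable def ergCoeff {n : ℕ} (P : Matrix (Fin n) (Fin n) ℝ) : ℝ :=
  1 - ⨅ p : Fin n × Fin n, ∑ s, min (P p.1 s) (P p.2 s)

section Aux
variable {n : ℕ}

lemma minHalf (a b : ℝ) : min a b = (a + b - |a - b|) / 2 := by
  rcases le_total a b with h | h
  · rw [min_eq_left h, abs_of_nonpos (by linarith)]; ring
  · rw [min_eq_right h, abs_of_nonneg (by linarith)]; ring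

def RowStoch (M : Matrix (Fin n) (Fin n) ℝ) : Prop :=
  (∀ i j, 0 ≤ M i j) ∧ ∀ i, ∑ j, M i j = 1

lemma bddB (f : Fin n × Fin n → ℝ) : BddBelow (Set.range f) := (Set.finite_range f).bddBelow

lemma sum_min_eq {M : Matrix (Fin n) (Fin n) ℝ} (hM : RowStoch M) (i j : Fin n) :
    ∑ s, min (M i s) (M j s) = 1 - (∑ s, |M i s - M j s|) / 2 := by
  simp_rw [minHalf]
  rw [← Finset.sum_div, Finset.sum_sub_distrib, Finset.sum_add_distrib, hM.2 i, hM.2 j]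
  ring

lemma ergCoeff_nonneg [Nonempty (Fin n)] {M : Matrix (Fin n) (Fin n) ℝ} (hM : RowStoch M) :
    0 ≤ ergCoeff M := by
  obtain ⟨i⟩ := (inferInstance : Nonempty (Fin n))
  have h : (⨅ p : Fin n × Fin n, ∑ s, min (M p.1 s) (M p.2 s)) ≤ ∑ s, min (M i s) (M i s) :=
    ciInf_le (bddB _) (i, i)
  simp only [min_self] at h
  rw [hM.2 i] at h
  simp only [ergCoeff]; linarith

lemma D_le [Nonempty (Fin n)] {M : Matrix (Fin n) (Fin n) ℝ} (hM : RowStoch M) (i j : Fin n) :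
    ∑ s, |M i s - M j s| ≤ 2 * ergCoeff M := by
  have h : (⨅ p : Fin n × Fin n, ∑ s, min (M p.1 s) (M p.2 s)) ≤ ∑ s, min (M i s) (M j s) :=
    ciInf_le (bddB _) (i, j)
  rw [sum_min_eq hM i j] at h
  simp only [ergCoeff]; linarith
end Aux

variable {n : ℕ}

lemma key_contraction [Nonempty (Fin n)] {Q : Matrix (Fin n) (Fin n) ℝ} (hQ : RowStoch Q)
    (x : Fin n → ℝ) (hx : ∑ k, x k = 0) :
    ∑ s, |∑ k, x k * Q k s| ≤ ergCoeff Q * ∑ k, |x k| := by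
  set p : Fin n → ℝ := fun k => max (x k) 0 with hp
  set m : Fin n → ℝ := fun k => max (-x k) 0 with hm
  have hpm : ∀ k, x k = p k - m k := by
    intro k
    rcases le_total (x k) 0 with h | h
    · rw [hp, hm]; simp only
      rw [max_eq_right h, max_eq_left (by linarith)]; ring
    · rw [hp, hm]; simp only
      rw [max_eq_left h, max_eq_right (by linarith)]; ring
  have habs : ∀ k, |x k| = p k + m k := by
    intro k
    rcases le_total (x k) 0 with h | h
    · rw [abs_of_nonpos h, hp, hm]; simp only
      rw [max_eq_right h, max_eq_left (by linarith)]; ring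
    · rw [abs_of_nonneg h, hp, hm]; simp only
      rw [max_eq_left h, max_eq_right (by linarith)]; ring
  have hpn : ∀ k, 0 ≤ p k := fun k => le_max_right _ _
  have hmn : ∀ k, 0 ≤ m k := fun k => le_max_right _ _
  have hsum : ∑ k, p k = ∑ k, m k := by
    have h1 : ∑ k, p k - ∑ k, m k = 0 := by
      rw [← Finset.sum_sub_distrib]
      simp_rw [← hpm]; exact hx
    linarith
  set c := ∑ k, p k with hcdef
  have hc0 : 0 ≤ c := Finset.sum_nonneg fun k _ => hpn k
  by_cases hc : c = 0
  · have hp0 : ∀ k ∈ Finset.univ, p k = 0 :=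
      (Finset.sum_eq_zero_iff_of_nonneg fun k _ => hpn k).mp hc
    have hm0 : ∀ k ∈ Finset.univ, m k = 0 :=
      (Finset.sum_eq_zero_iff_of_nonneg fun k _ => hmn k).mp (hsum ▸ hc)
    have hx0 : ∀ k, x k = 0 := fun k => by
      rw [hpm k, hp0 k (Finset.mem_univ k), hm0 k (Finset.mem_univ k)]; ring
    simp [hx0]
  · have hcpos : 0 < c := lt_of_le_of_ne hc0 (Ne.symm hc)
    have expand : ∀ s, ∑ k, ∑ l, p k * m l * (Q k s - Q l s)
        = (∑ k, p k * Q k s) * (∑ l, m l) - (∑ k, p k) * (∑ l, m l * Q l s) := by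
      intro s
      have h1 : ∀ k, ∑ l, p k * m l * (Q k s - Q l s)
          = p k * Q k s * (∑ l, m l) - p k * (∑ l, m l * Q l s) := by
        intro k
        rw [Finset.mul_sum, Finset.mul_sum, ← Finset.sum_sub_distrib]
        exact Finset.sum_congr rfl fun l _ => by ring
      simp_rw [h1]
      rw [Finset.sum_sub_distrib, ← Finset.sum_mul, ← Finset.sum_mul]
    have hid : ∀ s, ∑ k, x k * Q k s = (∑ k, ∑ l, p k * m l * (Q k s - Q l s)) / c := by
      intro s
      rw [eq_div_iff hc, expand s, ← hsum]
      have hx' : ∑ k, x k * Q k s = ∑ k, p k * Q k s - ∑ k, m k * Q k s := by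
        rw [← Finset.sum_sub_distrib]
        exact Finset.sum_congr rfl fun k _ => by rw [hpm k]; ring
      rw [hx', ← hcdef]; ring
    calc ∑ s, |∑ k, x k * Q k s|
        = ∑ s, |∑ k, ∑ l, p k * m l * (Q k s - Q l s)| / c := by
          refine Finset.sum_congr rfl fun s _ => ?_
          rw [hid s, abs_div, abs_of_pos hcpos]
      _ ≤ ∑ s, (∑ k, ∑ l, p k * m l * |Q k s - Q l s|) / c := by
          refine Finset.sum_le_sum fun s _ => ?_
          have h1 : |∑ k, ∑ l, p k * m l * (Q k s - Q l s)|
              ≤ ∑ k, ∑ l, p k * m l * |Q k s - Q l s| := by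
            refine (Finset.abs_sum_le_sum_abs _ _).trans ?_
            refine Finset.sum_le_sum fun k _ => ?_
            refine (Finset.abs_sum_le_sum_abs _ _).trans ?_
            refine Finset.sum_le_sum fun l _ => ?_
            rw [abs_mul, abs_of_nonneg (mul_nonneg (hpn k) (hmn l))]
          exact div_le_div_of_nonneg_right h1 hcpos.le |>.trans_eq rfl
      _ = (∑ k, ∑ l, p k * m l * (∑ s, |Q k s - Q l s|)) / c := by
          rw [← Finset.sum_div]
          congr 1
          rw [Finset.sum_comm]
          refine Finset.sum_congr rfl fun k _ => ?_
          rw [Finset.sum_comm]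
          exact Finset.sum_congr rfl fun l _ => (Finset.mul_sum _ _ _).symm
      _ ≤ (∑ k, ∑ l, p k * m l * (2 * ergCoeff Q)) / c := by
          refine div_le_div_of_nonneg_right ?_ hcpos.le |>.trans_eq rfl
          refine Finset.sum_le_sum fun k _ => Finset.sum_le_sum fun l _ => ?_
          exact mul_le_mul_of_nonneg_left (D_le hQ k l) (mul_nonneg (hpn k) (hmn l))
      _ = ergCoeff Q * ∑ k, |x k| := by
          have h2 : ∀ k, ∑ l, p k * m l * (2 * ergCoeff Q)
              = p k * ((∑ l, m l) * (2 * ergCoeff Q)) := by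
            intro k
            rw [show p k * ((∑ l, m l) * (2 * ergCoeff Q))
                = (∑ l, m l) * (p k * (2 * ergCoeff Q)) from by ring, Finset.sum_mul]
            exact Finset.sum_congr rfl fun l _ => by ring
          have h3 : ∑ k, |x k| = c + c := by
            simp_rw [habs]
            rw [Finset.sum_add_distrib, ← hsum, ← hcdef]
          simp_rw [h2]
          rw [← Finset.sum_mul, ← hsum, ← hcdef, h3]
          field_simp
          ring

lemma RowStoch.matmul {P Q : Matrix (Fin n) (Fin n) ℝ} (hP : RowStoch P) (hQ : RowStoch Q) :
    RowStoch (P * Q) := by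
  constructor
  · intro i j
    rw [Matrix.mul_apply]
    exact Finset.sum_nonneg fun k _ => mul_nonneg (hP.1 i k) (hQ.1 k j)
  · intro i
    simp_rw [Matrix.mul_apply]
    rw [Finset.sum_comm]
    have h : ∀ k, ∑ j, P i k * Q k j = P i k := by
      intro k; rw [← Finset.mul_sum, hQ.2 k, mul_one]
    simp_rw [h]
    exact hP.2 i

lemma ergCoeff_mul_le [Nonempty (Fin n)] {P Q : Matrix (Fin n) (Fin n) ℝ}
    (hP : RowStoch P) (hQ : RowStoch Q) :
    ergCoeff (P * Q) ≤ ergCoeff P * ergCoeff Q := by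
  have hPQ := hP.matmul hQ
  have key : ∀ i j : Fin n,
      1 - ergCoeff P * ergCoeff Q ≤ ∑ s, min ((P * Q) i s) ((P * Q) j s) := by
    intro i j
    rw [sum_min_eq hPQ i j]
    have hx : ∑ k, (P i k - P j k) = 0 := by
      rw [Finset.sum_sub_distrib, hP.2, hP.2, sub_self]
    have h2 : ∀ s, (P * Q) i s - (P * Q) j s = ∑ k, (P i k - P j k) * Q k s := by
      intro s
      rw [Matrix.mul_apply, Matrix.mul_apply, ← Finset.sum_sub_distrib]
      exact Finset.sum_congr rfl fun k _ => by ring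
    have hD : ∑ s, |(P * Q) i s - (P * Q) j s| ≤ 2 * (ergCoeff P * ergCoeff Q) := by
      simp_rw [h2]
      refine (key_contraction hQ (fun k => P i k - P j k) hx).trans ?_
      calc ergCoeff Q * ∑ k, |P i k - P j k|
          ≤ ergCoeff Q * (2 * ergCoeff P) :=
            mul_le_mul_of_nonneg_left (D_le hP i j) (ergCoeff_nonneg hQ)
        _ = 2 * (ergCoeff P * ergCoeff Q) := by ring
    linarith
  have hle : 1 - ergCoeff P * ergCoeff Q
      ≤ ⨅ p : Fin n × Fin n, ∑ s, min ((P * Q) p.1 s) ((P * Q) p.2 s) :=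
    le_ciInf fun q => key q.1 q.2
  simp only [ergCoeff] at hle ⊢
  linarith

section Mats
variable {n : ℕ}

lemma qEntry (A : Matrix (Fin n) (Fin n) ℝ) (d : Fin n → ℝ) (i j : Fin n) :
    (1 + Matrix.diagonal d * A) i j = (if i = j then (1 : ℝ) else 0) + d i * A i j := by
  rw [Matrix.add_apply, Matrix.one_apply, Matrix.diagonal_mul]

lemma pEntry (A : Matrix (Fin n) (Fin n) ℝ) (i j : Fin n) :
    (1 + A) i j = (if i = j then (1 : ℝ) else 0) + A i j := by
  rw [Matrix.add_apply, Matrix.one_apply]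

lemma RS_P (A : Matrix (Fin n) (Fin n) ℝ)
    (hoff : ∀ i j, i ≠ j → 0 ≤ A i j) (hdiag : ∀ i, A i i ∈ Set.Icc (-1 : ℝ) 0)
    (hrowsum : ∀ i, ∑ j, A i j = 0) : RowStoch (1 + A) := by
  constructor
  · intro i j
    rw [pEntry]
    by_cases h : i = j
    · subst h; rw [if_pos rfl]
      have := (hdiag i).1; linarith
    · simp only [if_neg h, zero_add]; exact hoff i j h
  · intro i
    simp_rw [pEntry]
    rw [Finset.sum_add_distrib, hrowsum, add_zero]
    simp

lemma RS_Q (A : Matrix (Fin n) (Fin n) ℝ)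
    (hoff : ∀ i j, i ≠ j → 0 ≤ A i j) (hdiag : ∀ i, A i i ∈ Set.Icc (-1 : ℝ) 0)
    (hrowsum : ∀ i, ∑ j, A i j = 0) (d : Fin n → ℝ) (hd : ∀ i, d i ∈ Set.Icc (0 : ℝ) 1) :
    RowStoch (1 + Matrix.diagonal d * A) := by
  constructor
  · intro i j
    rw [qEntry]
    by_cases h : i = j
    · subst h; rw [if_pos rfl]
      obtain ⟨h1, h2⟩ := hdiag i
      obtain ⟨g1, g2⟩ := hd i
      nlinarith [mul_le_mul_of_nonneg_left h1 g1]
    · simp only [if_neg h, zero_add]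
      exact mul_nonneg (hd i).1 (hoff i j h)
  · intro i
    simp_rw [qEntry]
    rw [Finset.sum_add_distrib, ← Finset.mul_sum, hrowsum, mul_zero, add_zero]
    simp

lemma tau_bound [Nonempty (Fin n)] (A : Matrix (Fin n) (Fin n) ℝ)
    (hoff : ∀ i j, i ≠ j → 0 ≤ A i j) (hdiag : ∀ i, A i i ∈ Set.Icc (-1 : ℝ) 0)
    (hrowsum : ∀ i, ∑ j, A i j = 0) (δ : ℝ)
    (hδdef : δ = ⨅ p : Fin n × Fin n,
      ∑ s, min ((1 + A : Matrix (Fin n) (Fin n) ℝ) p.1 s)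
               ((1 + A : Matrix (Fin n) (Fin n) ℝ) p.2 s))
    (d : Fin n → ℝ) (hd : ∀ i, d i ∈ Set.Icc (0 : ℝ) 1) :
    ergCoeff (1 + Matrix.diagonal d * A) ≤ 1 - δ * ⨅ i, d i := by
  have hμ0 : 0 ≤ ⨅ i, d i := le_ciInf fun i => (hd i).1
  have hμle : ∀ i, (⨅ i, d i) ≤ d i := fun i => ciInf_le ((Set.finite_range d).bddBelow) i
  have key : ∀ i j : Fin n, δ * ⨅ i, d i
      ≤ ∑ s, min ((1 + Matrix.diagonal d * A) i s) ((1 + Matrix.diagonal d * A) j s) := by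
    intro i j
    have hQP : ∀ i s, (⨅ i, d i) * (1 + A) i s ≤ (1 + Matrix.diagonal d * A) i s := by
      intro i s
      rw [qEntry, pEntry]
      by_cases h : i = s
      · rw [if_pos h]
        obtain ⟨h1, h2⟩ := hdiag i
        obtain ⟨g1, g2⟩ := hd i
        have e1 := hμle i
        have e2 : (⨅ i, d i) ≤ 1 := e1.trans g2
        subst h
        nlinarith [mul_le_mul_of_nonneg_left h1 g1]
      · simp only [if_neg h, zero_add]
        have hAs : 0 ≤ A i s := hoff i s h
        exact mul_le_mul_of_nonneg_right (hμle i) hAs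
    have hmin : ∀ s, (⨅ i, d i) * min ((1 + A) i s) ((1 + A) j s)
        ≤ min ((1 + Matrix.diagonal d * A) i s) ((1 + Matrix.diagonal d * A) j s) := by
      intro s
      refine le_min ?_ ?_
      · exact (mul_le_mul_of_nonneg_left (min_le_left _ _) hμ0).trans (hQP i s)
      · exact (mul_le_mul_of_nonneg_left (min_le_right _ _) hμ0).trans (hQP j s)
    have hδle : δ ≤ ∑ s, min ((1 + A : Matrix (Fin n) (Fin n) ℝ) i s)
        ((1 + A : Matrix (Fin n) (Fin n) ℝ) j s) := by
      rw [hδdef]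
      exact ciInf_le (bddB _) (i, j)
    calc δ * ⨅ i, d i = (⨅ i, d i) * δ := mul_comm _ _
      _ ≤ (⨅ i, d i) * ∑ s, min ((1 + A) i s) ((1 + A) j s) :=
          mul_le_mul_of_nonneg_left hδle hμ0
      _ = ∑ s, (⨅ i, d i) * min ((1 + A) i s) ((1 + A) j s) := Finset.mul_sum _ _ _
      _ ≤ _ := Finset.sum_le_sum fun s _ => hmin s
  have hle : δ * (⨅ i, d i) ≤ ⨅ p : Fin n × Fin n,
      ∑ s, min ((1 + Matrix.diagonal d * A) p.1 s) ((1 + Matrix.diagonal d * A) p.2 s) :=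
    le_ciInf fun q => key q.1 q.2
  simp only [ergCoeff]
  linarith
end Mats

/-- If `P = I + A` is scrambling with `δ > 0`, `ωᵢ(t) ≤ 1/2` eventually, and
`∑ₜ minᵢ ωᵢ(t) = ∞`, then (i) `τ₁(I + Ω(t)A) ≤ 1 - δ minᵢ ωᵢ(t)` for `t ≥ T`, and
(ii) the ergodicity coefficient of the products tends to zero. -/
theorem ergodicity_coefficient_tendsto_zero
    (n : ℕ) (hn : 0 < n)
    (A : Matrix (Fin n) (Fin n) ℝ)
    (hoff : ∀ i j, i ≠ j → 0 ≤ A i j)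
    (hdiag : ∀ i, A i i ∈ Set.Icc (-1 : ℝ) 0)
    (hrowsum : ∀ i, ∑ j, A i j = 0)
    (δ : ℝ)
    (hδdef : δ = ⨅ p : Fin n × Fin n,
      ∑ s, min ((1 + A : Matrix (Fin n) (Fin n) ℝ) p.1 s)
               ((1 + A : Matrix (Fin n) (Fin n) ℝ) p.2 s))
    (hδpos : 0 < δ)
    (w : ℕ → Fin n → ℝ) (hw : ∀ t i, w t i ∈ Set.Icc (0 : ℝ) 1)
    (T : ℕ) (hT : ∀ t, T ≤ t → ∀ i, w t i ≤ 1 / 2)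
    (hdiv : Tendsto (fun T' => ∑ s ∈ Finset.range T', ⨅ i, w s i) atTop atTop)
    (P' : ℕ → Matrix (Fin n) (Fin n) ℝ)
    (hP0 : P' 0 = 1 + Matrix.diagonal (w 0) * A)
    (hPrec : ∀ t, P' (t + 1) = (1 + Matrix.diagonal (w (t + 1)) * A) * P' t) :
    (∀ t, T ≤ t →
      ergCoeff (1 + Matrix.diagonal (w t) * A) ≤ 1 - δ * ⨅ i, w t i) ∧
    Tendsto (fun t => ergCoeff (P' t)) atTop (𝓝 0) := by
  haveI : Nonempty (Fin n) := ⟨⟨0, hn⟩⟩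
  have hRSP : RowStoch (1 + A) := RS_P A hoff hdiag hrowsum
  have hQRS : ∀ t, RowStoch (1 + Matrix.diagonal (w t) * A) :=
    fun t => RS_Q A hoff hdiag hrowsum (w t) (hw t)
  have hi : ∀ t, ergCoeff (1 + Matrix.diagonal (w t) * A) ≤ 1 - δ * ⨅ i, w t i :=
    fun t => tau_bound A hoff hdiag hrowsum δ hδdef (w t) (hw t)
  refine ⟨fun t _ => hi t, ?_⟩
  have hμ0 : ∀ s, 0 ≤ ⨅ i, w s i := fun s => le_ciInf fun i => (hw s i).1
  have hμ1 : ∀ s, (⨅ i, w s i) ≤ 1 := fun s =>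
    (ciInf_le ((Set.finite_range _).bddBelow) (Classical.arbitrary (Fin n))).trans (hw s _).2
  have hδ1 : δ ≤ 1 := by
    obtain ⟨i⟩ := (inferInstance : Nonempty (Fin n))
    have h : δ ≤ ∑ s, min ((1 + A : Matrix (Fin n) (Fin n) ℝ) i s)
        ((1 + A : Matrix (Fin n) (Fin n) ℝ) i s) := by
      rw [hδdef]; exact ciInf_le (bddB _) (i, i)
    simp only [min_self] at h
    rw [hRSP.2 i] at h
    exact h
  have hfac0 : ∀ s, 0 ≤ 1 - δ * ⨅ i, w s i := by
    intro s
    have := mul_le_one₀ hδ1 (hμ0 s) (hμ1 s)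
    linarith
  have hRSP' : ∀ t, RowStoch (P' t) := by
    intro t
    induction t with
    | zero => rw [hP0]; exact hQRS 0
    | succ t ih => rw [hPrec]; exact (hQRS (t + 1)).matmul ih
  have hbound : ∀ t, ergCoeff (P' t) ≤ ∏ s ∈ Finset.range (t + 1), (1 - δ * ⨅ i, w s i) := by
    intro t
    induction t with
    | zero => rw [hP0, Finset.prod_range_one]; exact hi 0
    | succ t ih =>
      rw [hPrec, Finset.prod_range_succ]
      calc ergCoeff ((1 + Matrix.diagonal (w (t + 1)) * A) * P' t)
          ≤ ergCoeff (1 + Matrix.diagonal (w (t + 1)) * A) * ergCoeff (P' t) :=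
            ergCoeff_mul_le (hQRS (t + 1)) (hRSP' t)
        _ ≤ (1 - δ * ⨅ i, w (t + 1) i) * ∏ s ∈ Finset.range (t + 1), (1 - δ * ⨅ i, w s i) :=
            mul_le_mul (hi (t + 1)) ih (ergCoeff_nonneg (hRSP' t)) (hfac0 _)
        _ = (∏ s ∈ Finset.range (t + 1), (1 - δ * ⨅ i, w s i)) * (1 - δ * ⨅ i, w (t + 1) i) :=
            mul_comm _ _
  have hexp : ∀ t, ∏ s ∈ Finset.range (t + 1), (1 - δ * ⨅ i, w s i)
      ≤ Real.exp (-(δ * ∑ s ∈ Finset.range (t + 1), ⨅ i, w s i)) := by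
    intro t
    have h1 : ∏ s ∈ Finset.range (t + 1), (1 - δ * ⨅ i, w s i)
        ≤ ∏ s ∈ Finset.range (t + 1), Real.exp (-(δ * ⨅ i, w s i)) := by
      refine Finset.prod_le_prod (fun s _ => hfac0 s) (fun s _ => ?_)
      have := Real.add_one_le_exp (-(δ * ⨅ i, w s i))
      linarith
    refine h1.trans_eq ?_
    rw [← Real.exp_sum]
    congr 1
    rw [Finset.mul_sum, ← Finset.sum_neg_distrib]
  have htend : Tendsto (fun t => Real.exp (-(δ * ∑ s ∈ Finset.range (t + 1), ⨅ i, w s i)))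
      atTop (𝓝 0) := by
    apply Real.tendsto_exp_atBot.comp
    have h2 : Tendsto (fun t => ∑ s ∈ Finset.range (t + 1), ⨅ i, w s i) atTop atTop :=
      hdiv.comp (tendsto_add_atTop_nat 1)
    have h3 : Tendsto (fun t => δ * ∑ s ∈ Finset.range (t + 1), ⨅ i, w s i) atTop atTop :=
      Tendsto.const_mul_atTop hδpos h2
    exact tendsto_neg_atTop_atBot.comp h3
  exact tendsto_of_tendsto_of_tendsto_of_le_of_le tendsto_const_nhds htend
    (fun t => ergCoeff_nonneg (hRSP' t)) (fun t => (hbound t).trans (hexp t))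
end

section
/- Let G be an invertible n₁×n₁ real matrix with (G⁻¹)_{ii} ≠ 0 for a fixed index i, and let p > 0. Then, as the real parameter d → ∞, the matrix G − p·d·e_i·e_iᵀ is eventually invertible and lim_{d→∞} (1/(n₁−1))·( ∑_{j=1}^{n₁} (−p·d·((G − p·d·e_i·e_iᵀ)⁻¹)_{ji}) − 1 ) = (1/(n₁−1))·( (∑_{j=1}^{n₁} (G⁻¹)_{ji}) / (G⁻¹)_{ii} − 1 ). -/
open Matrix Filter Topology


/-!
With `A = G⁻¹` and `E = eᵢeᵢᵀ`, the matrix determinant lemma gives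
`det (G - t E) = det G * (1 - t Aᵢᵢ)`, and `(G - t E) * (A * E) = (1 - t Aᵢᵢ) • E`
shows that column `i` of `(G - t E)⁻¹` is column `i` of `A` divided by `1 - t Aᵢᵢ`.
So the sum in question is `-t / (1 - t Aᵢᵢ) * ∑ⱼ Aⱼᵢ` with `t = p d`, and
`-t / (1 - t Aᵢᵢ) → Aᵢᵢ⁻¹` as `t → ∞`.
-/

namespace Matrix

variable {n K : Type*} [Fintype n] [DecidableEq n] [Field K]

theorem det_sub_single_same {G : Matrix n n K} (hG : IsUnit G.det) (i : n) (t : K) :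
    (G - single i i t).det = G.det * (1 - t * G⁻¹ i i) := by
  have hUV : single i () (-t) * single () i (1 : K) = -single i i t := by
    rw [single_mul_single_same, mul_one, single_neg]
  rw [sub_eq_add_neg, ← hUV, det_add_mul _ _ hG, det_unique (1 + _), add_apply,
    single_mul_mul_single, one_apply_eq, single_apply_same]
  ring

theorem isUnit_det_sub_single_same {G : Matrix n n K} (hG : IsUnit G.det) {i : n} {t : K}
    (h : 1 - t * G⁻¹ i i ≠ 0) : IsUnit (G - single i i t).det := by
  rw [det_sub_single_same hG]
  exact hG.mul h.isUnit

theorem sub_single_same_mul_inv_mul_single {G : Matrix n n K} (hG : IsUnit G.det) (i : n) (t : K) :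
    (G - single i i t) * (G⁻¹ * single i i 1) = (1 - t * G⁻¹ i i) • single i i 1 := by
  rw [Matrix.sub_mul, ← Matrix.mul_assoc, mul_nonsing_inv G hG, Matrix.one_mul,
    ← Matrix.mul_assoc, single_mul_mul_single, sub_smul, one_smul, smul_single]
  simp

theorem inv_sub_single_same_apply {G : Matrix n n K} (hG : IsUnit G.det) {i : n} {t : K}
    (h : 1 - t * G⁻¹ i i ≠ 0) (j : n) :
    (G - single i i t)⁻¹ j i = G⁻¹ j i / (1 - t * G⁻¹ i i) := by
  have hcol : (G - single i i t)⁻¹ * single i i 1 =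
      (1 - t * G⁻¹ i i)⁻¹ • (G⁻¹ * single i i 1) := by
    have hE : single i i (1 : K) =
        (1 - t * G⁻¹ i i)⁻¹ • ((G - single i i t) * (G⁻¹ * single i i 1)) := by
      rw [sub_single_same_mul_inv_mul_single hG, inv_smul_smul₀ h]
    conv_lhs => rw [hE]
    rw [Matrix.mul_smul, nonsing_inv_mul_cancel_left _ _ (isUnit_det_sub_single_same hG h)]
  simpa [div_eq_inv_mul] using congrFun (congrFun hcol j) i

end Matrix

theorem tendsto_neg_div_one_sub_mul_atTop {a : ℝ} (ha : a ≠ 0) :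
    Tendsto (fun t : ℝ => -t / (1 - t * a)) atTop (𝓝 a⁻¹) := by
  have h : Tendsto (fun t : ℝ => (a - t⁻¹)⁻¹) atTop (𝓝 a⁻¹) := by
    simpa using ((tendsto_const_nhds (x := a)).sub tendsto_inv_atTop_zero).inv₀
      (by rwa [sub_zero])
  refine h.congr' ?_
  filter_upwards [eventually_gt_atTop 0] with t ht
  field_simp
  rw [← neg_sub (1 : ℝ), div_neg]

theorem eventually_one_sub_mul_ne_zero_atTop (a : ℝ) :
    ∀ᶠ t : ℝ in atTop, 1 - t * a ≠ 0 :=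
  (eventually_ne_atTop a⁻¹).mono fun _ ht h =>
    ht (eq_inv_of_mul_eq_one_left (sub_eq_zero.mp h).symm)

theorem harmonic_influence_limit_general
    (n₁ : ℕ)
    (G : Matrix (Fin n₁) (Fin n₁) ℝ) (hG : IsUnit G.det)
    (i : Fin n₁) (hGii : G⁻¹ i i ≠ 0)
    (p : ℝ) (hp : 0 < p) :
    (∀ᶠ d : ℝ in atTop,
      IsUnit (G - Matrix.single i i (p * d)).det) ∧
    Tendsto
      (fun d : ℝ => (1 / ((n₁ : ℝ) - 1)) *
        ((∑ j, (-(p * d) * (G - Matrix.single i i (p * d))⁻¹ j i)) - 1))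
      atTop
      (𝓝 ((1 / ((n₁ : ℝ) - 1)) * ((∑ j, G⁻¹ j i) / G⁻¹ i i - 1))) := by
  have hpd : Tendsto (p * ·) atTop atTop := tendsto_id.const_mul_atTop hp
  have hne := hpd.eventually (eventually_one_sub_mul_ne_zero_atTop (G⁻¹ i i))
  refine ⟨hne.mono fun d => isUnit_det_sub_single_same hG, ?_⟩
  have hlim := ((((tendsto_neg_div_one_sub_mul_atTop hGii).comp hpd).mul_const
    (∑ j, G⁻¹ j i)).sub_const 1).const_mul (1 / ((n₁ : ℝ) - 1))
  rw [inv_mul_eq_div] at hlim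
  refine hlim.congr' (hne.mono fun d hd => ?_)
  simp only [Function.comp_apply, Finset.mul_sum, inv_sub_single_same_apply hG hd]
  congr 2
  refine Finset.sum_congr rfl fun j _ => ?_
  ring

/-- As `d → ∞`, `G - p d eᵢeᵢᵀ` is eventually invertible and the limit of the
harmonic-influence expression equals `(1/(n₁-1)) ((∑ⱼ (G⁻¹)ⱼᵢ)/(G⁻¹)ᵢᵢ - 1)`. -/
theorem harmonic_influence_limit
    (n₁ : ℕ) (hn₁ : 2 ≤ n₁)
    (G : Matrix (Fin n₁) (Fin n₁) ℝ) (hG : IsUnit G.det)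
    (i : Fin n₁) (hGii : G⁻¹ i i ≠ 0)
    (p : ℝ) (hp : 0 < p) :
    (∀ᶠ d : ℝ in atTop,
      IsUnit (G - Matrix.single i i (p * d)).det) ∧
    Tendsto
      (fun d : ℝ => (1 / ((n₁ : ℝ) - 1)) *
        ((∑ j, (-(p * d) * (G - Matrix.single i i (p * d))⁻¹ j i)) - 1))
      atTop
      (𝓝 ((1 / ((n₁ : ℝ) - 1)) * ((∑ j, G⁻¹ j i) / G⁻¹ i i - 1))) :=
  harmonic_influence_limit_general n₁ G hG i hGii p hp
end

section
/- Suppose every non-stubborn agent is reachable from a stubborn agent, let θ₀ ∈ [0,1]^{n₀}, let p > 0, and for a finite set S ⊆ V₁ define f(S) = −eᵀ·(G − p·∑_{i∈S} e_i e_iᵀ)⁻¹·(F·θ₀ + p·∑_{i∈S} e_i), where e is the all-ones vector in ℝ^{n₁} and e_i the standard basis vector for coordinate i (the matrices G − p·∑_{i∈S} e_i e_iᵀ are invertible under these hypotheses). Then f is monotone and submodular: for all S ⊆ T ⊆ V₁ one has f(S) ≤ f(T), and for all S ⊆ T ⊆ V₁ and k ∈ V₁ \ T one has f(S ∪ {k})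 − f(S) ≥ f(T ∪ {k}) − f(T). -/
open Matrix
open Finset

section helpers
variable {n : ℕ}

lemma mulVec_mono {M : Matrix (Fin n) (Fin n) ℝ} (hM : ∀ i j, 0 ≤ M i j)
    {u v : Fin n → ℝ} (huv : ∀ i, u i ≤ v i) : ∀ i, (M *ᵥ u) i ≤ (M *ᵥ v) i := by
  intro i
  simp only [Matrix.mulVec, dotProduct]
  exact Finset.sum_le_sum fun j _ => mul_le_mul_of_nonneg_left (huv j) (hM i j)

lemma pow_entry_nonneg {M : Matrix (Fin n) (Fin n) ℝ} (hM : ∀ i j, 0 ≤ M i j) :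
    ∀ (m : ℕ) (i j : Fin n), 0 ≤ (M ^ m) i j := by
  intro m
  induction m with
  | zero => intro i j; simp [Matrix.one_apply]; positivity
  | succ m ih =>
      intro i j
      rw [pow_succ, Matrix.mul_apply]
      exact Finset.sum_nonneg fun l _ => mul_nonneg (ih i l) (hM l j)

lemma zmatrix_nonneg_sol {B : Matrix (Fin n) (Fin n) ℝ}
    (hZ : ∀ i j, i ≠ j → B i j ≤ 0) {x : Fin n → ℝ}
    (hx : ∀ i, 0 < x i) (hBx : ∀ i, 0 < (B *ᵥ x) i)
    {y : Fin n → ℝ} (hy : ∀ i, 0 ≤ (B *ᵥ y) i) : ∀ i, 0 ≤ y i := by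
  by_contra h
  push_neg at h
  obtain ⟨i0, hi0⟩ := h
  obtain ⟨k, -, hk⟩ := Finset.exists_min_image Finset.univ (fun j => y j / x j)
    ⟨i0, Finset.mem_univ i0⟩
  have hrk : y k / x k < 0 :=
    lt_of_le_of_lt (hk i0 (Finset.mem_univ i0)) (div_neg_of_neg_of_pos hi0 (hx i0))
  set r := y k / x k with hr
  have hyl : ∀ l, r * x l ≤ y l := by
    intro l
    have h1 : r ≤ y l / x l := hk l (Finset.mem_univ l)
    have h2 : r * x l ≤ (y l / x l) * x l :=
      mul_le_mul_of_nonneg_right h1 (le_of_lt (hx l))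
    calc r * x l ≤ (y l / x l) * x l := h2
      _ = y l := div_mul_cancel₀ _ (ne_of_gt (hx l))
  have hyk : y k = r * x k := (div_mul_cancel₀ _ (ne_of_gt (hx k))).symm
  have key : (B *ᵥ y) k ≤ r * (B *ᵥ x) k := by
    have hsum : (B *ᵥ y) k - r * (B *ᵥ x) k = ∑ l, B k l * (y l - r * x l) := by
      simp only [Matrix.mulVec, dotProduct, Finset.mul_sum,
        ← Finset.sum_sub_distrib]
      congr 1; ext l; ring
    have hle : ∑ l, B k l * (y l - r * x l) ≤ 0 := by
      apply Finset.sum_nonpos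
      intro l _
      by_cases hlk : l = k
      · subst hlk; rw [← hyk]; simp [hyk]
      · exact mul_nonpos_of_nonpos_of_nonneg (hZ k l (Ne.symm hlk))
          (by linarith [hyl l])
    linarith [hsum, hle]
  have : (B *ᵥ y) k < 0 := lt_of_le_of_lt key (mul_neg_of_neg_of_pos hrk (hBx k))
  exact absurd (hy k) (not_le.mpr this)

lemma zmatrix_det_ne_zero {B : Matrix (Fin n) (Fin n) ℝ}
    (hZ : ∀ i j, i ≠ j → B i j ≤ 0) {x : Fin n → ℝ}
    (hx : ∀ i, 0 < x i) (hBx : ∀ i, 0 < (B *ᵥ x) i) : B.det ≠ 0 := by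
  intro hdet
  obtain ⟨v, hv0, hv⟩ := (Matrix.exists_mulVec_eq_zero_iff).mpr hdet
  have h1 : ∀ i, 0 ≤ v i :=
    zmatrix_nonneg_sol hZ hx hBx (y := v) (fun i => by rw [hv]; exact le_refl 0)
  have h2 : ∀ i, 0 ≤ (-v) i :=
    zmatrix_nonneg_sol hZ hx hBx (y := -v) (fun i => by rw [Matrix.mulVec_neg, hv]; simp)
  exact hv0 (funext fun i => le_antisymm (by simpa using h2 i) (h1 i))

end helpers

/-- The equilibrium opinion-sum objective obtained when a stubborn agent of opinion one and
posting rate `p` targets the set `S` of non-stubborn agents: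
`f(S) = -eᵀ (G - p ∑_{i∈S} eᵢeᵢᵀ)⁻¹ (F θ₀ + p ∑_{i∈S} eᵢ)`. -/
noncomputable def opinionSumObj {n₀ n₁ : ℕ}
    (G : Matrix (Fin n₁) (Fin n₁) ℝ) (F : Matrix (Fin n₁) (Fin n₀) ℝ)
    (θ₀ : Fin n₀ → ℝ) (p : ℝ) (S : Finset (Fin n₁)) : ℝ :=
  -∑ j, ((G - ∑ i ∈ S, Matrix.single i i p)⁻¹ *ᵥ
      (F *ᵥ θ₀ + fun j' => if j' ∈ S then p else 0)) j

section blockaux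
variable {n₀ n₁ : ℕ}

lemma Dapply (p : ℝ) (S : Finset (Fin n₁)) (v : Fin n₁ → ℝ) (j : Fin n₁) :
    ((∑ i ∈ S, Matrix.single i i p) *ᵥ v) j = (if j ∈ S then p * v j else 0) := by
  have hD : ∀ l : Fin n₁, (∑ i ∈ S, Matrix.single i i p) j l
      = if j = l ∧ j ∈ S then p else 0 := by
    intro l
    rw [Matrix.sum_apply]
    by_cases hjl : j = l
    · subst hjl
      by_cases hjS : j ∈ S
      · rw [Finset.sum_eq_single j]
        · simp [Matrix.single, hjS]
        · intro i _ hij; simp [Matrix.single, hij]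
        · intro h; exact absurd hjS h
      · rw [Finset.sum_eq_zero, if_neg (by tauto)]
        intro i hi
        have : i ≠ j := fun h => hjS (h ▸ hi)
        simp [Matrix.single, this]
    · rw [Finset.sum_eq_zero, if_neg (by tauto)]
      intro i _
      by_cases hij : i = j
      · subst hij; simp [Matrix.single, hjl]
      · simp [Matrix.single, hij]
  simp only [Matrix.mulVec, dotProduct, hD]
  rw [Finset.sum_eq_single j]
  · by_cases h : j ∈ S <;> simp [h]
  · intro l _ hlj
    rw [if_neg (by exact fun h => hlj (h.1.symm)), zero_mul]
  · intro h; exact absurd (Finset.mem_univ j) h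


lemma Doff (p : ℝ) (S : Finset (Fin n₁)) {i j : Fin n₁} (h : i ≠ j) :
    (∑ i ∈ S, Matrix.single i i p) i j = 0 := by
  rw [Matrix.sum_apply, Finset.sum_eq_zero]
  intro l _
  by_cases hl : l = i
  · subst hl; simp [Matrix.single, h]
  · simp [Matrix.single, hl]


lemma blockFacts (Fm : Matrix (Fin n₁) (Fin n₀) ℝ) (G : Matrix (Fin n₁) (Fin n₁) ℝ)
    (θ₀ : Fin n₀ → ℝ) (hθ₀ : ∀ k, θ₀ k ∈ Set.Icc (0:ℝ) 1)
    (p : ℝ) (hp : 0 < p)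
    (hF : ∀ i k, 0 ≤ Fm i k)
    (hGoff : ∀ i j, i ≠ j → 0 ≤ G i j)
    (hGrow : ∀ i, ∑ j, G i j = -∑ k, Fm i k)
    (x : Fin n₁ → ℝ) (hx : ∀ i, 0 < x i) (hGx : ∀ i, (G *ᵥ x) i < 0) :
    (∀ S : Finset (Fin n₁),
      IsUnit (G - ∑ i ∈ S, Matrix.single i i p).det) ∧
    (∀ S T : Finset (Fin n₁), S ⊆ T →
      opinionSumObj G Fm θ₀ p S ≤ opinionSumObj G Fm θ₀ p T) ∧
    (∀ (S T : Finset (Fin n₁)) (k : Fin n₁), S ⊆ T → k ∉ T →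
      opinionSumObj G Fm θ₀ p (insert k T) - opinionSumObj G Fm θ₀ p T ≤
        opinionSumObj G Fm θ₀ p (insert k S) - opinionSumObj G Fm θ₀ p S) := by
  -- the matrices B S = D S - G
  set B : Finset (Fin n₁) → Matrix (Fin n₁) (Fin n₁) ℝ :=
    fun S => (∑ i ∈ S, Matrix.single i i p) - G with hBdef
  have hBapply : ∀ S v j, (B S *ᵥ v) j = (if j ∈ S then p * v j else 0) - (G *ᵥ v) j := by
    intro S v j
    rw [hBdef, Matrix.sub_mulVec, Pi.sub_apply, Dapply]
  have hZ : ∀ S, ∀ i j, i ≠ j → (B S) i j ≤ 0 := by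
    intro S i j hij
    rw [hBdef]
    simp only [Matrix.sub_apply]
    rw [Doff p S hij]
    linarith [hGoff i j hij]
  have hBx : ∀ S i, 0 < (B S *ᵥ x) i := by
    intro S i
    rw [hBapply]
    have h1 : 0 ≤ (if i ∈ S then p * x i else 0) := by
      by_cases h : i ∈ S
      · rw [if_pos h]; exact le_of_lt (mul_pos hp (hx i))
      · rw [if_neg h]
    linarith [hGx i]
  have hdet : ∀ S, (B S).det ≠ 0 := fun S => zmatrix_det_ne_zero (hZ S) hx (hBx S)
  have hU : ∀ S, IsUnit (B S).det := fun S => isUnit_iff_ne_zero.mpr (hdet S)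
  have hBinv : ∀ S v, (B S) *ᵥ ((B S)⁻¹ *ᵥ v) = v := by
    intro S v
    rw [Matrix.mulVec_mulVec, Matrix.mul_nonsing_inv _ (hU S), Matrix.one_mulVec]
  have hinvB : ∀ S v, (B S)⁻¹ *ᵥ ((B S) *ᵥ v) = v := by
    intro S v
    rw [Matrix.mulVec_mulVec, Matrix.nonsing_inv_mul _ (hU S), Matrix.one_mulVec]
  have P : ∀ S (b : Fin n₁ → ℝ), (∀ i, 0 ≤ b i) → ∀ i, 0 ≤ ((B S)⁻¹ *ᵥ b) i := by
    intro S b hb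
    exact zmatrix_nonneg_sol (hZ S) hx (hBx S) (y := (B S)⁻¹ *ᵥ b)
      (by rw [hBinv]; exact hb)
  -- the right-hand-side vectors and solutions
  set b : Finset (Fin n₁) → (Fin n₁ → ℝ) :=
    fun S => (Fm *ᵥ θ₀ + fun j' => if j' ∈ S then p else 0) with hbdef
  have hb0 : ∀ S j, 0 ≤ b S j := by
    intro S j
    rw [hbdef]
    have h1 : 0 ≤ (Fm *ᵥ θ₀) j := by
      rw [show (Fm *ᵥ θ₀) j = ∑ k, Fm j k * θ₀ k from rfl]
      exact Finset.sum_nonneg fun k _ => mul_nonneg (hF j k) (hθ₀ k).1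
    have h2 : (0:ℝ) ≤ if j ∈ S then p else 0 := by
      by_cases h : j ∈ S
      · rw [if_pos h]; exact le_of_lt hp
      · rw [if_neg h]
    exact add_nonneg h1 h2
  set xS : Finset (Fin n₁) → (Fin n₁ → ℝ) := fun S => (B S)⁻¹ *ᵥ b S with hxSdef
  -- the objective equals the sum of the solution
  have hneg : ∀ S, G - ∑ i ∈ S, Matrix.single i i p = -(B S) := by
    intro S; rw [hBdef]; exact (neg_sub _ _).symm
  have hinvneg : ∀ S, (G - ∑ i ∈ S, Matrix.single i i p)⁻¹ = -(B S)⁻¹ := by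
    intro S
    rw [hneg S]
    apply Matrix.inv_eq_right_inv
    rw [neg_mul_neg]
    exact Matrix.mul_nonsing_inv _ (hU S)
  have hobj : ∀ S, opinionSumObj G Fm θ₀ p S = ∑ j, xS S j := by
    intro S
    unfold opinionSumObj
    rw [hinvneg S, Matrix.neg_mulVec, ← Finset.sum_neg_distrib]
    simp only [Pi.neg_apply, neg_neg]
    rfl
  have hx0 : ∀ S j, 0 ≤ xS S j := fun S => P S (b S) (hb0 S)
  have hBx1 : ∀ S i, (B S *ᵥ (fun _ => (1:ℝ))) i
      = (if i ∈ S then p else 0) + ∑ k, Fm i k := by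
    intro S i
    rw [hBapply]
    have : (G *ᵥ fun _ => (1:ℝ)) i = ∑ j, G i j := by
      simp [Matrix.mulVec, dotProduct]
    rw [this, hGrow i]
    by_cases h : i ∈ S <;> simp [h]
  have hx1 : ∀ S j, xS S j ≤ 1 := by
    intro S j
    have key : ∀ i, 0 ≤ (B S *ᵥ ((fun _ => (1:ℝ)) - xS S)) i := by
      intro i
      rw [Matrix.mulVec_sub, Pi.sub_apply, hBx1 S i]
      have hBxS : (B S *ᵥ xS S) = b S := hBinv S (b S)
      rw [hBxS]
      have h1 : (Fm *ᵥ θ₀) i ≤ ∑ k, Fm i k := by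
        have : (Fm *ᵥ θ₀) i = ∑ k, Fm i k * θ₀ k := rfl
        rw [this]
        exact Finset.sum_le_sum fun k _ => by
          nlinarith [(hθ₀ k).2, hF i k]
      rw [hbdef]
      simp only [Pi.add_apply]
      linarith
    have := P S _ key j
    rw [hinvB S] at this
    simpa using this
  -- difference computation
  have hdiff : ∀ S T, S ⊆ T → ∀ j, b T j - (B T *ᵥ xS S) j
      = if j ∈ T ∧ j ∉ S then p * (1 - xS S j) else 0 := by
    intro S T hST j
    have h1 : (if j ∈ S then p * xS S j else 0) - (G *ᵥ xS S) j = b S j := by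
      rw [← hBapply]; exact congrFun (hBinv S (b S)) j
    have hbS : b S j = (Fm *ᵥ θ₀) j + (if j ∈ S then p else 0) := rfl
    have hbT : b T j = (Fm *ᵥ θ₀) j + (if j ∈ T then p else 0) := rfl
    rw [hBapply, hbT]
    by_cases hjS : j ∈ S
    · have hjT := hST hjS
      rw [if_pos hjT, if_pos hjT, if_neg (fun h => h.2 hjS)]
      rw [if_pos hjS, hbS, if_pos hjS] at h1
      linarith
    · rw [if_neg hjS, hbS, if_neg hjS] at h1
      by_cases hjT : j ∈ T
      · rw [if_pos hjT, if_pos hjT, if_pos ⟨hjT, hjS⟩]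
        linarith
      · rw [if_neg hjT, if_neg hjT, if_neg (fun h => hjT h.1)]
        linarith
  -- monotonicity of the solution
  have hmono : ∀ S T, S ⊆ T → ∀ j, xS S j ≤ xS T j := by
    intro S T hST j
    have hw : ∀ i, 0 ≤ (b T - B T *ᵥ xS S) i := by
      intro i
      rw [Pi.sub_apply, hdiff S T hST i]
      by_cases h : i ∈ T ∧ i ∉ S
      · rw [if_pos h]
        have := hx1 S i
        nlinarith
      · rw [if_neg h]
    have h3 := P T _ hw j
    have h4 : (B T)⁻¹ *ᵥ (b T - B T *ᵥ xS S) = xS T - (B T)⁻¹ *ᵥ (B T *ᵥ xS S) := by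
      rw [Matrix.mulVec_sub]
    rw [h4, hinvB, Pi.sub_apply] at h3
    linarith
  -- monotonicity of the inverse
  have hinvmono : ∀ S T, S ⊆ T → ∀ (v : Fin n₁ → ℝ), (∀ i, 0 ≤ v i) →
      ∀ j, ((B T)⁻¹ *ᵥ v) j ≤ ((B S)⁻¹ *ᵥ v) j := by
    intro S T hST v hv j
    set u := (B S)⁻¹ *ᵥ v with hu
    have hu0 : ∀ i, 0 ≤ u i := P S v hv
    have hBTu : ∀ i, (B T *ᵥ u) i - v i = if i ∈ T ∧ i ∉ S then p * u i else 0 := by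
      intro i
      have h1 : (B S *ᵥ u) i = v i := congrFun (hBinv S v) i
      rw [hBapply] at h1
      rw [hBapply]
      by_cases hiS : i ∈ S
      · have hiT := hST hiS
        rw [if_pos hiT, if_neg (fun h => h.2 hiS)]
        rw [if_pos hiS] at h1
        linarith
      · rw [if_neg hiS] at h1
        by_cases hiT : i ∈ T
        · rw [if_pos hiT, if_pos ⟨hiT, hiS⟩]
          linarith
        · rw [if_neg hiT, if_neg (fun h => hiT h.1)]
          linarith
    have hw : ∀ i, 0 ≤ (B T *ᵥ u - v) i := by
      intro i
      rw [Pi.sub_apply, hBTu i]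
      by_cases h : i ∈ T ∧ i ∉ S
      · rw [if_pos h]; exact mul_nonneg (le_of_lt hp) (hu0 i)
      · rw [if_neg h]
    have h3 := P T _ hw j
    have h4 : (B T)⁻¹ *ᵥ (B T *ᵥ u - v) = u - (B T)⁻¹ *ᵥ v := by
      rw [Matrix.mulVec_sub, hinvB]
    rw [h4, Pi.sub_apply] at h3
    linarith
  -- the single-element marginal formula
  have hsingle : ∀ (k i : Fin n₁), (0:ℝ) ≤ (Pi.single k 1 : Fin n₁ → ℝ) i := by
    intro k i
    rw [Pi.single_apply]
    by_cases h : i = k <;> simp [h]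
  have hmarg : ∀ S (k : Fin n₁), k ∉ S →
      opinionSumObj G Fm θ₀ p (insert k S) - opinionSumObj G Fm θ₀ p S
      = (p * (1 - xS S k)) * ∑ j, ((B (insert k S))⁻¹ *ᵥ (Pi.single k 1)) j := by
    intro S k hk
    have hsub : S ⊆ insert k S := Finset.subset_insert k S
    have hw : (b (insert k S) - B (insert k S) *ᵥ xS S)
        = (p * (1 - xS S k)) • (Pi.single k 1 : Fin n₁ → ℝ) := by
      funext i
      rw [Pi.sub_apply, hdiff S (insert k S) hsub i, Pi.smul_apply, Pi.single_apply,
        smul_eq_mul]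
      by_cases hik : i = k
      · subst hik
        rw [if_pos ⟨Finset.mem_insert_self i S, hk⟩, if_pos rfl, mul_one]
      · have hnot : ¬ (i ∈ insert k S ∧ i ∉ S) := by
          rintro ⟨h1, h2⟩
          rcases Finset.mem_insert.mp h1 with h' | h'
          · exact hik h'
          · exact h2 h'
        rw [if_neg hnot, if_neg hik, mul_zero]
    have h2 : xS (insert k S) - xS S
        = (B (insert k S))⁻¹ *ᵥ ((p * (1 - xS S k)) • (Pi.single k 1 : Fin n₁ → ℝ)) := by
      rw [← hw, Matrix.mulVec_sub, hinvB]
    have h2' : ∀ j, xS (insert k S) j - xS S j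
        = (p * (1 - xS S k)) * ((B (insert k S))⁻¹ *ᵥ (Pi.single k 1 : Fin n₁ → ℝ)) j := by
      intro j
      have h5 := congrFun h2 j
      rw [Pi.sub_apply] at h5
      rw [h5, Matrix.mulVec_smul, Pi.smul_apply, smul_eq_mul]
    rw [hobj, hobj, ← Finset.sum_sub_distrib, Finset.mul_sum]
    exact Finset.sum_congr rfl fun j _ => h2' j
  refine ⟨?_, ?_, ?_⟩
  · intro S
    rw [hneg S, Matrix.det_neg]
    exact ((isUnit_one.neg).pow _).mul (hU S)
  · intro S T hST
    rw [hobj, hobj]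
    exact Finset.sum_le_sum fun j _ => hmono S T hST j
  · intro S T k hST hkT
    have hkS : k ∉ S := fun h => hkT (hST h)
    rw [hmarg T k hkT, hmarg S k hkS]
    have hm := hmono S T hST k
    have hc : 0 ≤ p * (1 - xS T k) := mul_nonneg hp.le (by linarith [hx1 T k])
    have hc2 : p * (1 - xS T k) ≤ p * (1 - xS S k) :=
      mul_le_mul_of_nonneg_left (by linarith) hp.le
    have hs1 : 0 ≤ ∑ j, ((B (insert k T))⁻¹ *ᵥ (Pi.single k 1 : Fin n₁ → ℝ)) j :=
      Finset.sum_nonneg fun j _ => P _ _ (hsingle k) j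
    have hs2 : ∑ j, ((B (insert k T))⁻¹ *ᵥ (Pi.single k 1 : Fin n₁ → ℝ)) j
        ≤ ∑ j, ((B (insert k S))⁻¹ *ᵥ (Pi.single k 1 : Fin n₁ → ℝ)) j :=
      Finset.sum_le_sum fun j _ => hinvmono (insert k S) (insert k T)
        (Finset.insert_subset_insert k hST) _ (hsingle k) j
    exact mul_le_mul hc2 hs2 hs1 (mul_nonneg hp.le (by linarith [hx1 S k]))


lemma exists_pos_vec {n₀ n₁ : ℕ} (hn₁ : 0 < n₁)
    (A : Matrix (Fin n₀ ⊕ Fin n₁) (Fin n₀ ⊕ Fin n₁) ℝ)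
    (hrow0 : ∀ (i : Fin n₀) (j : Fin n₀ ⊕ Fin n₁), A (Sum.inl i) j = 0)
    (hoff : ∀ i j, i ≠ j → 0 ≤ A i j)
    (hdiag : ∀ i, A i i ∈ Set.Icc (-1 : ℝ) 0)
    (hrowsum : ∀ i : Fin n₁, ∑ j, A (Sum.inr i) j = 0)
    (hreach : ∀ i : Fin n₁, ∃ (m : ℕ) (path : Fin (m + 1) → Fin n₀ ⊕ Fin n₁),
      1 ≤ m ∧ (∃ k : Fin n₀, path 0 = Sum.inl k) ∧ path (Fin.last m) = Sum.inr i ∧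
      ∀ l : Fin m, 0 < A (path l.succ) (path l.castSucc)) :
    ∃ x : Fin n₁ → ℝ, (∀ i, 0 < x i) ∧ ∀ i, (A.toBlocks₂₂ *ᵥ x) i < 0 := by
  set G : Matrix (Fin n₁) (Fin n₁) ℝ := A.toBlocks₂₂ with hGdef
  have hGapp : ∀ i j, G i j = A (Sum.inr i) (Sum.inr j) := fun i j => rfl
  set Q : Matrix (Fin n₁) (Fin n₁) ℝ := 1 + G with hQdef
  have hQ0 : ∀ i j, 0 ≤ Q i j := by
    intro i j
    rw [hQdef, Matrix.add_apply]
    by_cases h : i = j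
    · subst h
      rw [Matrix.one_apply_eq, hGapp]
      linarith [(hdiag (Sum.inr i)).1]
    · rw [Matrix.one_apply_ne h, hGapp]
      have : (Sum.inr i : Fin n₀ ⊕ Fin n₁) ≠ Sum.inr j := fun hc => h (Sum.inr.inj hc)
      linarith [hoff _ _ this]
  have hsplit : ∀ i, (∑ k, A (Sum.inr i) (Sum.inl k)) + ∑ j, A (Sum.inr i) (Sum.inr j) = 0 := by
    intro i
    rw [← Fintype.sum_sum_type]
    exact hrowsum i
  have hFnn : ∀ (i : Fin n₁) (k : Fin n₀), 0 ≤ A (Sum.inr i) (Sum.inl k) := by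
    intro i k
    exact hoff _ _ (by simp)
  have hQrow : ∀ i, ∑ j, Q i j = 1 - ∑ k, A (Sum.inr i) (Sum.inl k) := by
    intro i
    rw [hQdef]
    simp only [Matrix.add_apply]
    rw [Finset.sum_add_distrib]
    have h1 : ∑ j, (1 : Matrix (Fin n₁) (Fin n₁) ℝ) i j = 1 := by
      simp [Matrix.one_apply]
    have h2 : ∑ j, G i j = -∑ k, A (Sum.inr i) (Sum.inl k) := by
      have := hsplit i
      simp only [hGapp]
      linarith
    rw [h1, h2]
    ring
  set s : ℕ → Fin n₁ → ℝ := fun m => (Q ^ m) *ᵥ (fun _ => 1) with hsdef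
  have hs0 : ∀ i, s 0 i = 1 := by
    intro i; rw [hsdef]; simp [Matrix.one_mulVec]
  have hsrow : ∀ i, s 1 i = ∑ j, Q i j := by
    intro i; rw [hsdef]; simp [Matrix.mulVec, dotProduct]
  have hs1le : ∀ i, s 1 i ≤ 1 := by
    intro i
    rw [hsrow, hQrow]
    have : 0 ≤ ∑ k, A (Sum.inr i) (Sum.inl k) := Finset.sum_nonneg fun k _ => hFnn i k
    linarith
  have hsnn : ∀ m i, 0 ≤ s m i := by
    intro m i
    show 0 ≤ ((Q ^ m) *ᵥ fun _ => (1:ℝ)) i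
    have h1 : ((Q ^ m) *ᵥ fun _ => (1:ℝ)) i = ∑ j, (Q ^ m) i j * 1 := rfl
    rw [h1]
    exact Finset.sum_nonneg fun j _ => mul_nonneg (pow_entry_nonneg hQ0 m i j) zero_le_one
  have hsucc : ∀ m, s (m+1) = Q *ᵥ s m := by
    intro m
    rw [hsdef]
    show (Q ^ (m+1)) *ᵥ _ = _
    rw [pow_succ', ← Matrix.mulVec_mulVec]
  have hsucc' : ∀ m, s (m+1) = (Q ^ m) *ᵥ s 1 := by
    intro m
    have h1 : s 1 = Q *ᵥ fun _ => (1:ℝ) := by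
      show Q ^ 1 *ᵥ _ = _
      rw [pow_one]
    show (Q ^ (m+1)) *ᵥ _ = _
    rw [pow_succ, ← Matrix.mulVec_mulVec, h1]
  have hsle1 : ∀ m i, s m i ≤ 1 := by
    intro m
    induction m with
    | zero => intro i; rw [hs0]
    | succ m ih =>
        intro i
        rw [hsucc m]
        have h1 : (Q *ᵥ s m) i = ∑ j, Q i j * s m j := rfl
        rw [h1]
        calc ∑ j, Q i j * s m j ≤ ∑ j, Q i j * 1 :=
              Finset.sum_le_sum fun j _ => mul_le_mul_of_nonneg_left (ih j) (hQ0 i j)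
          _ = ∑ j, Q i j := by simp
          _ = s 1 i := (hsrow i).symm
          _ ≤ 1 := hs1le i
  have hstep : ∀ m i, s (m+1) i ≤ s m i := by
    intro m i
    rw [hsucc' m]
    have h1 : ((Q ^ m) *ᵥ s 1) i = ∑ j, (Q ^ m) i j * s 1 j := rfl
    have h2 : s m i = ∑ j, (Q ^ m) i j * 1 := by
      rw [hsdef]; simp [Matrix.mulVec, dotProduct]
    rw [h1, h2]
    exact Finset.sum_le_sum fun j _ =>
      mul_le_mul_of_nonneg_left (hs1le j) (pow_entry_nonneg hQ0 m i j)
  have hanti : ∀ m m', m ≤ m' → ∀ i, s m' i ≤ s m i := by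
    intro m m' h
    induction m' , h using Nat.le_induction with
    | base => intro i; exact le_refl _
    | succ m' hm ih => intro i; exact le_trans (hstep m' i) (ih i)
  have hprop : ∀ m (u v : Fin n₁), 0 < Q u v → s m v < 1 → s (m+1) u < 1 := by
    intro m u v hQuv hsv
    rw [hsucc m]
    have h1 : (Q *ᵥ s m) u = ∑ j, Q u j * s m j := rfl
    rw [h1]
    have hlt : ∑ j, Q u j * s m j < ∑ j, Q u j * 1 := by
      apply Finset.sum_lt_sum
      · intro j _
        exact mul_le_mul_of_nonneg_left (hsle1 m j) (hQ0 u j)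
      · exact ⟨v, Finset.mem_univ v, by
          have := mul_lt_mul_of_pos_left hsv hQuv
          simpa using this⟩
    have h2 : ∑ j, Q u j * 1 = s 1 u := by rw [hsrow]; simp
    linarith [hs1le u]
  -- reachability gives deficiency
  have hdefic : ∀ i, ∃ m, 1 ≤ m ∧ s m i < 1 := by
    intro i
    obtain ⟨m, path, hm, ⟨k0, h0⟩, hlast, hedge⟩ := hreach i
    have claim : ∀ t, 1 ≤ t → ∀ ht : t ≤ m, ∃ v, path ⟨t, by omega⟩ = Sum.inr v ∧ s t v < 1 := by
      intro t ht1
      induction t, ht1 using Nat.le_induction with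
      | base =>
          intro ht
          have he := hedge ⟨0, by omega⟩
          rw [Fin.succ_mk, Fin.castSucc_mk] at he
          have e0 : (⟨0, by omega⟩ : Fin (m+1)) = 0 := by ext; simp
          rw [e0, h0] at he
          rcases hpath1 : path ⟨1, by omega⟩ with j | v
          · rw [hpath1, hrow0] at he; exact absurd he (lt_irrefl 0)
          · refine ⟨v, rfl, ?_⟩
            rw [hpath1] at he
            rw [hsrow, hQrow]
            have h3 : A (Sum.inr v) (Sum.inl k0) ≤ ∑ k, A (Sum.inr v) (Sum.inl k) :=
              Finset.single_le_sum (fun k _ => hFnn v k) (Finset.mem_univ k0)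
            linarith
      | succ t ht ih =>
          intro hsucct
          obtain ⟨v, hv, hsv⟩ := ih (by omega)
          have he := hedge ⟨t, by omega⟩
          rw [Fin.succ_mk, Fin.castSucc_mk] at he
          rw [hv] at he
          rcases hpath : path ⟨t+1, by omega⟩ with j | u
          · rw [hpath, hrow0] at he; exact absurd he (lt_irrefl 0)
          · refine ⟨u, rfl, ?_⟩
            rw [hpath] at he
            have hQuv : 0 < Q u v := by
              by_cases huv : u = v
              · subst huv
                exact absurd he (not_lt.mpr (hdiag (Sum.inr u)).2)
              · rw [hQdef, Matrix.add_apply, Matrix.one_apply_ne huv, hGapp]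
                linarith
            exact hprop t u v hQuv hsv
    obtain ⟨v, hvpath, hsv⟩ := claim m hm (le_refl m)
    have : path ⟨m, by omega⟩ = Sum.inr i := hlast
    rw [hvpath] at this
    have hvi : v = i := Sum.inr.inj this
    exact ⟨m, hm, by rwa [hvi] at hsv⟩
  choose Mi hMi1 hMi2 using hdefic
  set M : ℕ := Finset.univ.sup Mi with hMdef
  have hM1 : 1 ≤ M := le_trans (hMi1 ⟨0, hn₁⟩) (Finset.le_sup (Finset.mem_univ _))
  have hsM : ∀ i, s M i < 1 := fun i =>
    lt_of_le_of_lt (hanti (Mi i) M (Finset.le_sup (Finset.mem_univ i)) i) (hMi2 i)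
  refine ⟨fun i => ∑ j ∈ Finset.range M, s j i, ?_, ?_⟩
  · intro i
    have h1 : s 0 i ≤ ∑ j ∈ Finset.range M, s j i :=
      Finset.single_le_sum (f := fun j => s j i) (fun j _ => hsnn j i)
        (Finset.mem_range.mpr hM1)
    rw [hs0 i] at h1
    linarith
  · intro i
    set x : Fin n₁ → ℝ := fun i => ∑ j ∈ Finset.range M, s j i with hxdef
    have hGQ : G *ᵥ x = Q *ᵥ x - x := by
      have : G = Q - 1 := by rw [hQdef, add_sub_cancel_left]
      rw [this, Matrix.sub_mulVec, Matrix.one_mulVec]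
    rw [hGQ, Pi.sub_apply]
    have hQx : (Q *ᵥ x) i = ∑ j ∈ Finset.range M, s (j+1) i := by
      have h1 : (Q *ᵥ x) i = ∑ l, Q i l * ∑ j ∈ Finset.range M, s j l := rfl
      rw [h1]
      have h2 : ∀ l, Q i l * ∑ j ∈ Finset.range M, s j l
          = ∑ j ∈ Finset.range M, Q i l * s j l := fun l => Finset.mul_sum _ _ _
      simp_rw [h2]
      rw [Finset.sum_comm]
      apply Finset.sum_congr rfl
      intro j _
      rw [hsucc j]
      rfl
    have htel : x i - (Q *ᵥ x) i = s 0 i - s M i := by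
      rw [hQx, hxdef]
      rw [← Finset.sum_sub_distrib]
      exact Finset.sum_range_sub' (fun j => s j i) M
    have := hsM i
    rw [hs0 i] at htel
    linarith

end blockaux

/-- Under the reachability hypothesis, the matrices `G - p ∑_{i∈S} eᵢeᵢᵀ` are
invertible and the set function `f` is monotone and submodular. -/
theorem opinionSumObj_monotone_submodular
    (n₀ n₁ : ℕ) (hn₀ : 0 < n₀) (hn₁ : 0 < n₁)
    (A : Matrix (Fin n₀ ⊕ Fin n₁) (Fin n₀ ⊕ Fin n₁) ℝ)
    (hrow0 : ∀ (i : Fin n₀) (j : Fin n₀ ⊕ Fin n₁), A (Sum.inl i) j = 0)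
    (hoff : ∀ i j, i ≠ j → 0 ≤ A i j)
    (hdiag : ∀ i, A i i ∈ Set.Icc (-1 : ℝ) 0)
    (hrowsum : ∀ i : Fin n₁, ∑ j, A (Sum.inr i) j = 0)
    (hreach : ∀ i : Fin n₁, ∃ (m : ℕ) (path : Fin (m + 1) → Fin n₀ ⊕ Fin n₁),
      1 ≤ m ∧ (∃ k : Fin n₀, path 0 = Sum.inl k) ∧ path (Fin.last m) = Sum.inr i ∧
      ∀ l : Fin m, 0 < A (path l.succ) (path l.castSucc))
    (θ₀ : Fin n₀ → ℝ) (hθ₀ : ∀ k, θ₀ k ∈ Set.Icc (0 : ℝ) 1)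
    (p : ℝ) (hp : 0 < p) :
    (∀ S : Finset (Fin n₁),
      IsUnit (A.toBlocks₂₂ - ∑ i ∈ S, Matrix.single i i p).det) ∧
    (∀ S T : Finset (Fin n₁), S ⊆ T →
      opinionSumObj A.toBlocks₂₂ A.toBlocks₂₁ θ₀ p S ≤
        opinionSumObj A.toBlocks₂₂ A.toBlocks₂₁ θ₀ p T) ∧
    (∀ (S T : Finset (Fin n₁)) (k : Fin n₁), S ⊆ T → k ∉ T →
      opinionSumObj A.toBlocks₂₂ A.toBlocks₂₁ θ₀ p (insert k T) -
          opinionSumObj A.toBlocks₂₂ A.toBlocks₂₁ θ₀ p T ≤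
        opinionSumObj A.toBlocks₂₂ A.toBlocks₂₁ θ₀ p (insert k S) -
          opinionSumObj A.toBlocks₂₂ A.toBlocks₂₁ θ₀ p S) := by
  obtain ⟨x, hx, hGx⟩ := exists_pos_vec hn₁ A hrow0 hoff hdiag hrowsum hreach
  have hF : ∀ (i : Fin n₁) (k : Fin n₀), 0 ≤ A.toBlocks₂₁ i k := by
    intro i k
    exact hoff _ _ (by simp)
  have hGoff : ∀ i j, i ≠ j → 0 ≤ A.toBlocks₂₂ i j := by
    intro i j hij
    exact hoff _ _ (fun hc => hij (Sum.inr.inj hc))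
  have hGrow : ∀ i, ∑ j, A.toBlocks₂₂ i j = -∑ k, A.toBlocks₂₁ i k := by
    intro i
    have := hrowsum i
    rw [Fintype.sum_sum_type] at this
    have h1 : ∀ j, A.toBlocks₂₂ i j = A (Sum.inr i) (Sum.inr j) := fun j => rfl
    have h2 : ∀ k, A.toBlocks₂₁ i k = A (Sum.inr i) (Sum.inl k) := fun k => rfl
    simp only [h1, h2]
    linarith
  exact blockFacts A.toBlocks₂₁ A.toBlocks₂₂ θ₀ hθ₀ p hp hF hGoff hGrow x hx hGx
end
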